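/- Let Z be a locally finite set of points in the Poincaré disk D, and suppose the points of Z are not all collinear and no 'degenerate' configurations occur (no four points concircular). If z₁, z₂ ∈ Z are such that their Voronoi cells with respect to the Euclidean metric touch, and every empty disk witnessing this touching is contained in the closed unit disk, then their Voronoi cells with respect to the hyperbolic metric also touch. -/

import Mathlib

noncomputable def distH (u v : EuclideanSpace ℝ (Fin 2)) : ℝ :=
  2 * Real.arsinh (‖u - v‖ / Real.sqrt ((1 - ‖u‖ ^ 2) * (1 - ‖v‖ ^ 2)))

/-- The Euclidean Voronoi cell of `z` with respect to the point set `Z`. -/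
noncomputable def cellE (Z : Set (EuclideanSpace ℝ (Fin 2)))
    (z : EuclideanSpace ℝ (Fin 2)) : Set (EuclideanSpace ℝ (Fin 2)) :=
  {u | dist u z = sInf ((fun z' => dist u z') '' Z)}

/-- The hyperbolic Voronoi cell of `z` with respect to the point set `Z ⊆ D`. -/
noncomputable def cellH (Z : Set (EuclideanSpace ℝ (Fin 2)))
    (z : EuclideanSpace ℝ (Fin 2)) : Set (EuclideanSpace ℝ (Fin 2)) :=
  {u | ‖u‖ < 1 ∧ distH u z = sInf ((fun z' => distH u z') '' Z)}

/-!
A point `c` of `cellE Z z₁ ∩ cellE Z z₂` is the centre of an empty disk through `z₁` and `z₂`,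
and these centres form a convex set on which `‖c‖ + dist c z₁ ≤ 1` by hypothesis. Local
finiteness and the absence of four concircular points of `Z` allow `c` to be moved along the
bisector of `z₁ z₂`, so there are two distinct centres; as `‖z₁‖ < 1`, the filled ellipse
`‖c‖ + dist c z₁ ≤ 1` with foci `0` and `z₁` is strictly convex, so their midpoint is the centre
of an empty disk inside the open unit disk. A Euclidean disk inside the open unit disk is a
hyperbolic disk, and its hyperbolic centre lies in both hyperbolic cells.
-/

open Real Metric Filter Topology
open scoped RealInnerProductSpace

theorem eq_csInf_image_iff {α β : Type*} [ConditionallyCompleteLinearOrder β] {f : α → β}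
    {s : Set α} {a : α} (ha : a ∈ s) (hf : BddBelow (f '' s)) :
    f a = sInf (f '' s) ↔ ∀ b ∈ s, f a ≤ f b :=
  ⟨fun h _ hb => h ▸ csInf_le hf (Set.mem_image_of_mem f hb),
    fun h => (IsLeast.csInf_eq ⟨Set.mem_image_of_mem f ha, Set.forall_mem_image.2 h⟩).symm⟩

theorem forall_nonpos_or_forall_nonneg_of_encard_le_three {α : Type*} {s : Set α}
    {f : α → ℝ} {a b : α} (hs : s.encard ≤ 3) (ha : a ∈ s) (hb : b ∈ s) (hab : a ≠ b)
    (hfa : f a = 0) (hfb : f b = 0) : (∀ x ∈ s, f x ≤ 0) ∨ ∀ x ∈ s, 0 ≤ f x := by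
  by_contra! ⟨⟨x, hx, hfx⟩, ⟨y, hy, hfy⟩⟩
  have hsub : ({a, b, x, y} : Set α) ⊆ s := by
    simp only [Set.insert_subset_iff, Set.singleton_subset_iff]
    exact ⟨ha, hb, hx, hy⟩
  have hcard : ({a, b, x, y} : Set α).encard = 4 := by
    have hxa : x ≠ a := by rintro rfl; linarith
    have hxb : x ≠ b := by rintro rfl; linarith
    have hya : y ≠ a := by rintro rfl; linarith
    have hyb : y ≠ b := by rintro rfl; linarith
    have hxy : x ≠ y := by rintro rfl; linarith
    rw [Set.encard_insert_of_notMem (by simp [hab, hxa.symm, hya.symm]),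
      Set.encard_insert_of_notMem (by simp [hxb.symm, hyb.symm]), Set.encard_pair hxy]
    rfl
  have := (Set.encard_le_encard hsub).trans hs
  rw [hcard] at this
  norm_num at this

theorem exists_pos_forall_add_le_dist {α : Type*} [PseudoMetricSpace α] {Z : Set α}
    (hZ : ∀ s : Set α, Bornology.IsBounded s → (Z ∩ s).Finite) (c : α) (ρ : ℝ) :
    ∃ δ > 0, ∀ z ∈ Z, ρ < dist z c → ρ + δ ≤ dist z c := by
  have hnear : ∀ᶠ δ in 𝓝 (0 : ℝ), δ ≤ 1 ∧
      ∀ z ∈ Z ∩ closedBall c (ρ + 1), ρ < dist z c → ρ + δ ≤ dist z c := by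
    refine (eventually_le_nhds one_pos).and
      ((eventually_all_finite (hZ _ isBounded_closedBall)).2 fun z _ => ?_)
    by_cases hz : ρ < dist z c
    · exact (eventually_lt_nhds (sub_pos.2 hz)).mono fun δ hδ _ => by linarith
    · exact Eventually.of_forall fun _ h => absurd h hz
  obtain ⟨δ, ⟨hδ1, hδ⟩, hδ0⟩ := ((hnear.filter_mono nhdsWithin_le_nhds).and
    (self_mem_nhdsWithin : Set.Ioi (0 : ℝ) ∈ 𝓝[>] 0)).exists
  refine ⟨δ, hδ0, fun z hz hρz => ?_⟩
  by_cases hzc : dist z c ≤ ρ + 1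
  · exact hδ z ⟨hz, hzc⟩ hρz
  · linarith

section InnerProductSpace

variable {E : Type*} [NormedAddCommGroup E] [InnerProductSpace ℝ E]

theorem dist_le_dist_iff_two_mul_inner_le (u z z' : E) :
    dist u z ≤ dist u z' ↔ 2 * ⟪u, z' - z⟫ ≤ ‖z'‖ ^ 2 - ‖z‖ ^ 2 := by
  rw [dist_eq_norm, dist_eq_norm, ← sq_le_sq₀ (norm_nonneg _) (norm_nonneg _),
    norm_sub_sq_real, norm_sub_sq_real, inner_sub_right]
  constructor <;> intro h <;> linarith

theorem convex_setOf_dist_le_dist (z z' : E) : Convex ℝ {u | dist u z ≤ dist u z'} := by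
  simp_rw [dist_le_dist_iff_two_mul_inner_le]
  exact convex_halfSpace_le ⟨fun x y => by rw [inner_add_left, mul_add],
    fun a x => by rw [real_inner_smul_left, smul_eq_mul]; ring⟩ _

theorem dist_add_smul_le_dist_add_smul {c e z₁ z : E} {η : ℝ} (h : dist c z₁ ≤ dist c z)
    (hη : 0 ≤ η) (he : ⟪e, z - z₁⟫ ≤ 0) : dist (c + η • e) z₁ ≤ dist (c + η • e) z := by
  rw [dist_le_dist_iff_two_mul_inner_le] at h ⊢
  rw [inner_add_left, real_inner_smul_left]
  nlinarith [mul_nonpos_of_nonneg_of_nonpos hη he]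

theorem exists_ne_zero_inner_eq_zero [FiniteDimensional ℝ E] (hE : 2 ≤ Module.finrank ℝ E)
    (w : E) : ∃ d ≠ 0, ⟪d, w⟫ = 0 := by
  have hspan : Module.finrank ℝ (ℝ ∙ w) ≤ 1 := by simpa using finrank_span_le_card ({w} : Set E)
  have hne : (ℝ ∙ w)ᗮ ≠ ⊥ := by
    intro h
    have := Submodule.finrank_add_finrank_orthogonal (ℝ ∙ w)
    rw [h, finrank_bot] at this
    omega
  obtain ⟨d, hd, hd0⟩ := Submodule.exists_mem_ne_zero_of_ne_bot hne
  exact ⟨d, hd0, Submodule.mem_orthogonal_singleton_iff_inner_left.1 hd⟩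

theorem norm_add_le_of_closedBall_subset [Nontrivial E] {c : E} {ρ R : ℝ} (hρ : 0 ≤ ρ)
    (h : closedBall c ρ ⊆ closedBall 0 R) : ‖c‖ + ρ ≤ R := by
  obtain ⟨v, hv, hcv⟩ : ∃ v : E, ‖v‖ = ρ ∧ ‖c + v‖ = ‖c‖ + ρ := by
    rcases eq_or_ne c 0 with rfl | hc
    · obtain ⟨v, hv⟩ := exists_norm_eq E hρ
      exact ⟨v, hv, by rw [zero_add, norm_zero, zero_add, hv]⟩
    · have hc' : 0 < ‖c‖ := norm_pos_iff.2 hc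
      refine ⟨(ρ / ‖c‖) • c, ?_, ?_⟩
      · rw [norm_smul, norm_div, norm_norm, Real.norm_of_nonneg hρ, div_mul_cancel₀ _ hc'.ne']
      · rw [show c + (ρ / ‖c‖) • c = (1 + ρ / ‖c‖) • c by rw [add_smul, one_smul], norm_smul,
          Real.norm_of_nonneg (by positivity), add_mul, one_mul, div_mul_cancel₀ _ hc'.ne']
  have := h (by rw [mem_closedBall, dist_eq_norm, add_sub_cancel_left, hv])
  rwa [mem_closedBall, dist_zero_right, hcv] at this

theorem norm_midpoint_add_dist_lt_one {a c₀ c₁ : E} (ha : ‖a‖ < 1) (hne : c₀ ≠ c₁)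
    (h₀ : ‖c₀‖ + dist c₀ a ≤ 1) (h₁ : ‖c₁‖ + dist c₁ a ≤ 1) :
    ‖midpoint ℝ c₀ c₁‖ + dist (midpoint ℝ c₀ c₁) a < 1 := by
  by_contra! hm
  set r₀ := dist c₀ a with hr₀_def
  set r₁ := dist c₁ a with hr₁_def
  have hm_norm : ‖midpoint ℝ c₀ c₁‖ = ‖c₀ + c₁‖ / 2 := by
    rw [midpoint_eq_smul_add, norm_smul]
    norm_num
    ring
  have hm_dist : dist (midpoint ℝ c₀ c₁) a ≤ (r₀ + r₁) / 2 := by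
    simpa only [midpoint_self] using dist_midpoint_midpoint_le c₀ c₁ a a
  have := norm_add_le c₀ c₁
  -- Equality must hold throughout: both disks are internally tangent to the unit sphere and
  -- `c₀, c₁` lie on a common ray, so `‖c₁ - c₀‖ = |r₀ - r₁| = |⟪c₁ - c₀, a⟫| < ‖c₁ - c₀‖`.
  have ht₀ : ‖c₀‖ = 1 - r₀ := by linarith
  have ht₁ : ‖c₁‖ = 1 - r₁ := by linarith
  have hadd : ‖c₀ + c₁‖ = ‖c₀‖ + ‖c₁‖ := by linarith
  have hinner : ⟪c₀, c₁⟫ = ‖c₀‖ * ‖c₁‖ := by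
    have := norm_add_sq_real c₀ c₁
    rw [hadd] at this
    linarith
  have hsub : ‖c₁ - c₀‖ ^ 2 = (r₀ - r₁) ^ 2 := by
    rw [norm_sub_sq_real, real_inner_comm, hinner, ht₀, ht₁]
    ring
  have hr₀ : r₀ ^ 2 = (1 - r₀) ^ 2 - 2 * ⟪c₀, a⟫ + ‖a‖ ^ 2 := by
    rw [← ht₀, hr₀_def, dist_eq_norm, norm_sub_sq_real]
  have hr₁ : r₁ ^ 2 = (1 - r₁) ^ 2 - 2 * ⟪c₁, a⟫ + ‖a‖ ^ 2 := by
    rw [← ht₁, hr₁_def, dist_eq_norm, norm_sub_sq_real]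
  have hdiff : r₀ - r₁ = ⟪c₁ - c₀, a⟫ := by
    rw [inner_sub_left]
    linarith
  have hcs := real_inner_mul_inner_self_le (c₁ - c₀) a
  rw [← hdiff, real_inner_self_eq_norm_sq, real_inner_self_eq_norm_sq, ← sq, ← hsub] at hcs
  have hpos : 0 < ‖c₁ - c₀‖ ^ 2 := pow_pos (norm_pos_iff.2 (sub_ne_zero.2 hne.symm)) 2
  have := mul_lt_mul_of_pos_left (pow_lt_one₀ (norm_nonneg a) ha two_ne_zero) hpos
  linarith

end InnerProductSpace

local notation "ℝ²" => EuclideanSpace ℝ (Fin 2)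

theorem mem_cellE_iff {Z : Set ℝ²} {z u : ℝ²} (hz : z ∈ Z) :
    u ∈ cellE Z z ↔ ∀ z' ∈ Z, dist u z ≤ dist u z' :=
  eq_csInf_image_iff hz ⟨0, Set.forall_mem_image.2 fun _ _ => dist_nonneg⟩

theorem mem_cellE_inter_iff {Z : Set ℝ²} {z₁ z₂ u : ℝ²} (hz₁ : z₁ ∈ Z) (hz₂ : z₂ ∈ Z) :
    u ∈ cellE Z z₁ ∩ cellE Z z₂ ↔ dist u z₁ = dist u z₂ ∧ ∀ z ∈ Z, dist u z₁ ≤ dist u z := by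
  rw [Set.mem_inter_iff, mem_cellE_iff hz₁, mem_cellE_iff hz₂]
  exact ⟨fun ⟨h₁, h₂⟩ => ⟨le_antisymm (h₁ z₂ hz₂) (h₂ z₁ hz₁), h₁⟩,
    fun ⟨h, h₁⟩ => ⟨h₁, fun z hz => h ▸ h₁ z hz⟩⟩

theorem convex_cellE {Z : Set ℝ²} {z : ℝ²} (hz : z ∈ Z) : Convex ℝ (cellE Z z) := by
  have : cellE Z z = ⋂ z' ∈ Z, {u | dist u z ≤ dist u z'} := by
    ext u
    simp only [mem_cellE_iff hz, Set.mem_iInter, Set.mem_ofPred_eq]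
  rw [this]
  exact convex_iInter₂ fun z' _ => convex_setOf_dist_le_dist z z'

theorem exists_ne_mem_cellE_inter {Z : Set ℝ²}
    (hZ : ∀ s : Set ℝ², Bornology.IsBounded s → (Z ∩ s).Finite)
    (hcirc : ∀ (c : ℝ²) (ρ : ℝ), {z ∈ Z | dist z c = ρ}.encard ≤ 3)
    {z₁ z₂ : ℝ²} (hz₁ : z₁ ∈ Z) (hz₂ : z₂ ∈ Z) (hne : z₁ ≠ z₂) {c : ℝ²}
    (hc : c ∈ cellE Z z₁ ∩ cellE Z z₂) : ∃ c' ∈ cellE Z z₁ ∩ cellE Z z₂, c' ≠ c := by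
  obtain ⟨h₁₂, hmin⟩ := (mem_cellE_inter_iff hz₁ hz₂).1 hc
  set ρ := dist c z₁
  set S := {z ∈ Z | dist z c = ρ}
  have hz₁S : z₁ ∈ S := ⟨hz₁, dist_comm _ _⟩
  have hz₂S : z₂ ∈ S := ⟨hz₂, by rw [dist_comm, h₁₂]⟩
  obtain ⟨d, hd0, hd⟩ := exists_ne_zero_inner_eq_zero (by rw [finrank_euclideanSpace_fin])
    (z₂ - z₁)
  -- Besides `z₁, z₂` at most one point of `Z` lies on the circle, so all of them lie on one side
  -- of the chord `z₁ z₂`; we move the centre away from that side.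
  obtain ⟨e, he0, he, heS⟩ :
      ∃ e : ℝ², e ≠ 0 ∧ ⟪e, z₂ - z₁⟫ = 0 ∧ ∀ z ∈ S, ⟪e, z - z₁⟫ ≤ 0 := by
    rcases forall_nonpos_or_forall_nonneg_of_encard_le_three (f := fun z => ⟪d, z - z₁⟫)
      (hcirc c ρ) hz₁S hz₂S hne (by simp) hd with h | h
    · exact ⟨d, hd0, hd, h⟩
    · exact ⟨-d, neg_ne_zero.2 hd0, by rw [inner_neg_left, hd, neg_zero],
        fun z hz => by rw [inner_neg_left]; linarith [h z hz]⟩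
  obtain ⟨δ, hδ, hgap⟩ := exists_pos_forall_add_le_dist hZ c ρ
  set c' := c + (δ / (2 * ‖e‖)) • e
  have hcc' : dist c' c = δ / 2 := by
    have : ‖e‖ ≠ 0 := norm_ne_zero_iff.2 he0
    rw [dist_eq_norm, add_sub_cancel_left, norm_smul, norm_of_nonneg (by positivity)]
    field_simp
  have hmin' : ∀ z ∈ Z, dist c' z₁ ≤ dist c' z := by
    intro z hz
    rcases (hmin z hz).eq_or_lt with h | h
    · exact dist_add_smul_le_dist_add_smul (hmin z hz) (by positivity)
        (heS z ⟨hz, by rw [dist_comm]; exact h.symm⟩)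
    · have := hgap z hz (by rwa [dist_comm] at h)
      linarith [dist_triangle c' c z₁, dist_triangle z c' c, dist_comm z c']
  have h₂₁ : dist c' z₂ ≤ dist c' z₁ := dist_add_smul_le_dist_add_smul h₁₂.ge
    (by positivity) (by rw [← neg_sub, inner_neg_right, he, neg_zero])
  refine ⟨c', (mem_cellE_inter_iff hz₁ hz₂).2 ⟨le_antisymm (hmin' z₂ hz₂) h₂₁, hmin'⟩, fun h => ?_⟩
  rw [h, dist_self] at hcc'
  linarith

theorem exists_mem_cellE_inter_norm_add_dist_lt_one {Z : Set ℝ²}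
    (hZ : ∀ s : Set ℝ², Bornology.IsBounded s → (Z ∩ s).Finite)
    (hcirc : ∀ (c : ℝ²) (ρ : ℝ), {z ∈ Z | dist z c = ρ}.encard ≤ 3)
    {z₁ z₂ : ℝ²} (hz₁ : z₁ ∈ Z) (hz₂ : z₂ ∈ Z) (hne : z₁ ≠ z₂) (hz₁D : ‖z₁‖ < 1)
    (htouch : (cellE Z z₁ ∩ cellE Z z₂).Nonempty)
    (hdisk : ∀ c ∈ cellE Z z₁ ∩ cellE Z z₂, ‖c‖ + dist c z₁ ≤ 1) :
    ∃ c ∈ cellE Z z₁ ∩ cellE Z z₂, ‖c‖ + dist c z₁ < 1 := by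
  obtain ⟨c₀, hc₀⟩ := htouch
  obtain ⟨c₁, hc₁, hne'⟩ := exists_ne_mem_cellE_inter hZ hcirc hz₁ hz₂ hne hc₀
  exact ⟨midpoint ℝ c₁ c₀, ((convex_cellE hz₁).inter (convex_cellE hz₂)).midpoint_mem hc₁ hc₀,
    norm_midpoint_add_dist_lt_one hz₁D hne' (hdisk c₁ hc₁) (hdisk c₀ hc₀)⟩

theorem distH_nonneg (u v : ℝ²) : 0 ≤ distH u v :=
  mul_nonneg zero_le_two (arsinh_nonneg_iff.2 (div_nonneg (norm_nonneg _) (sqrt_nonneg _)))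

theorem mem_cellH_iff {Z : Set ℝ²} {z u : ℝ²} (hz : z ∈ Z) :
    u ∈ cellH Z z ↔ ‖u‖ < 1 ∧ ∀ z' ∈ Z, distH u z ≤ distH u z' :=
  Iff.rfl.and (eq_csInf_image_iff hz ⟨0, Set.forall_mem_image.2 fun _ _ => distH_nonneg _ _⟩)

theorem sinh_half_distH_sq {u v : ℝ²} (hu : ‖u‖ < 1) (hv : ‖v‖ < 1) :
    sinh (distH u v / 2) ^ 2 = ‖u - v‖ ^ 2 / ((1 - ‖u‖ ^ 2) * (1 - ‖v‖ ^ 2)) := by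
  have hD : 0 ≤ (1 - ‖u‖ ^ 2) * (1 - ‖v‖ ^ 2) :=
    mul_nonneg (sub_nonneg.2 (pow_le_one₀ (norm_nonneg u) hu.le))
      (sub_nonneg.2 (pow_le_one₀ (norm_nonneg v) hv.le))
  rw [distH, mul_div_cancel_left₀ _ two_ne_zero, sinh_arsinh, div_pow, sq_sqrt hD]

theorem le_iff_sinh_half_sq_le {a b : ℝ} (ha : 0 ≤ a) (hb : 0 ≤ b) :
    a ≤ b ↔ sinh (a / 2) ^ 2 ≤ sinh (b / 2) ^ 2 := by
  rw [sq_le_sq₀ (sinh_nonneg_iff.2 (by positivity)) (sinh_nonneg_iff.2 (by positivity)),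
    sinh_le_sinh, div_le_div_iff_of_pos_right two_pos]

-- With `s = ‖c‖`, the Euclidean disk `closedBall c ρ` is the hyperbolic disk centred at `μ • c`
-- exactly when `μ` solves this quadratic; the root chosen is the smaller one.
theorem exists_one_le_root_of_add_lt_one {s ρ : ℝ} (hs : 0 ≤ s) (hρ : 0 ≤ ρ) (h : s + ρ < 1) :
    ∃ μ, 1 ≤ μ ∧ μ * s < 1 ∧ s ^ 2 * μ ^ 2 - (1 + s ^ 2 - ρ ^ 2) * μ + 1 = 0 := by
  set B := 1 + s ^ 2 - ρ ^ 2
  have hB : 2 * s < B := by nlinarith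
  have hB₂ : B ≤ 1 + s ^ 2 := by nlinarith
  set q := √(B ^ 2 - 4 * s ^ 2)
  have hq : q ^ 2 = B ^ 2 - 4 * s ^ 2 := sq_sqrt (by nlinarith)
  have hq₀ : 0 ≤ q := sqrt_nonneg _
  clear_value B q
  have hBq : 0 < B + q := by linarith
  refine ⟨2 / (B + q), ?_, ?_, ?_⟩
  · rw [le_div_iff₀ hBq, one_mul, ← le_sub_iff_add_le', ← sq_le_sq₀ hq₀ (by nlinarith), hq]
    nlinarith
  · rw [div_mul_eq_mul_div, div_lt_one hBq]
    linarith
  · field_simp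
    linear_combination hq

theorem exists_distH_le_iff_dist_le {c : ℝ²} {ρ : ℝ} (hρ : 0 ≤ ρ) (h : ‖c‖ + ρ < 1) :
    ∃ p r, ‖p‖ < 1 ∧ ∀ u : ℝ², ‖u‖ < 1 →
      (distH p u ≤ r ↔ dist u c ≤ ρ) ∧ (r ≤ distH p u ↔ ρ ≤ dist u c) := by
  obtain ⟨μ, hμ₁, hμc, hμ⟩ := exists_one_le_root_of_add_lt_one (norm_nonneg c) hρ h
  set p := μ • c
  have hpn : ‖p‖ = μ * ‖c‖ := by rw [norm_smul, norm_of_nonneg (by linarith)]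
  have hp : ‖p‖ < 1 := hpn ▸ hμc
  have hp₂ : ‖p‖ ^ 2 = μ ^ 2 * ‖c‖ ^ 2 := by rw [hpn, mul_pow]
  have hp' : 0 < 1 - ‖p‖ ^ 2 := sub_pos.2 (pow_lt_one₀ (norm_nonneg p) hp two_ne_zero)
  set t := (μ - 1) / (1 - ‖p‖ ^ 2) with ht_def
  have ht : 0 ≤ t := div_nonneg (by linarith) hp'.le
  have hr : 0 ≤ 2 * arsinh √t := mul_nonneg zero_le_two (arsinh_nonneg_iff.2 (sqrt_nonneg t))
  have hrt : sinh (2 * arsinh √t / 2) ^ 2 = t := by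
    rw [mul_div_cancel_left₀ _ two_ne_zero, sinh_arsinh, sq_sqrt ht]
  have key : ∀ u : ℝ², ‖u‖ < 1 → sinh (distH p u / 2) ^ 2 =
      t + μ / ((1 - ‖p‖ ^ 2) * (1 - ‖u‖ ^ 2)) * (dist u c ^ 2 - ρ ^ 2) := by
    intro u hu
    have hu' : 1 - ‖u‖ ^ 2 ≠ 0 := (sub_pos.2 (pow_lt_one₀ (norm_nonneg u) hu two_ne_zero)).ne'
    have := hp'.ne'
    rw [sinh_half_distH_sq hp hu, ht_def, dist_eq_norm, norm_sub_sq_real, norm_sub_sq_real,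
      real_inner_smul_left, real_inner_comm]
    field_simp
    linear_combination hμ + hp₂
  refine ⟨p, 2 * arsinh √t, hp, fun u hu => ?_⟩
  have hκ : 0 < μ / ((1 - ‖p‖ ^ 2) * (1 - ‖u‖ ^ 2)) :=
    div_pos (by linarith) (mul_pos hp' (sub_pos.2 (pow_lt_one₀ (norm_nonneg u) hu two_ne_zero)))
  rw [le_iff_sinh_half_sq_le (distH_nonneg p u) hr, le_iff_sinh_half_sq_le hr (distH_nonneg p u),
    hrt, key u hu, add_le_iff_nonpos_right, le_add_iff_nonneg_right, ← sq_le_sq₀ dist_nonneg hρ,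
    ← sq_le_sq₀ hρ dist_nonneg, ← sub_nonpos (a := dist u c ^ 2), ← sub_nonneg (a := dist u c ^ 2)]
  exact ⟨by rw [← neg_nonneg, ← mul_neg, mul_nonneg_iff_of_pos_left hκ, neg_nonneg],
    mul_nonneg_iff_of_pos_left hκ⟩

theorem stmt6_general (Z : Set (EuclideanSpace ℝ (Fin 2)))
    (hZD : ∀ z ∈ Z, ‖z‖ < 1)
    (hloc : ∀ s : Set (EuclideanSpace ℝ (Fin 2)), Bornology.IsBounded s → (Z ∩ s).Finite)
    (hncirc : ∀ (c : EuclideanSpace ℝ (Fin 2)) (ρ : ℝ),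
      {z ∈ Z | dist z c = ρ}.encard ≤ 3)
    (z₁ z₂ : EuclideanSpace ℝ (Fin 2)) (hz₁ : z₁ ∈ Z) (hz₂ : z₂ ∈ Z) (hne : z₁ ≠ z₂)
    -- the Euclidean cells touch
    (htouch : (cellE Z z₁ ∩ cellE Z z₂).Nonempty)
    -- every empty disk witnessing this touching is contained in the closed unit disk
    (hwitness : ∀ (c : EuclideanSpace ℝ (Fin 2)) (ρ : ℝ), 0 < ρ →
      dist z₁ c = ρ → dist z₂ c = ρ → (∀ z ∈ Z, ¬ dist z c < ρ) →
      Metric.closedBall c ρ ⊆ Metric.closedBall (0 : EuclideanSpace ℝ (Fin 2)) 1) :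
    (cellH Z z₁ ∩ cellH Z z₂).Nonempty := by
  have hdisk : ∀ c ∈ cellE Z z₁ ∩ cellE Z z₂, ‖c‖ + dist c z₁ ≤ 1 := by
    intro c hc
    obtain ⟨h₁₂, hmin⟩ := (mem_cellE_inter_iff hz₁ hz₂).1 hc
    have hρ : 0 < dist c z₁ := dist_pos.2 fun h => hne (by rwa [h, dist_self, eq_comm,
      dist_eq_zero] at h₁₂)
    refine norm_add_le_of_closedBall_subset hρ.le (hwitness c _ hρ (dist_comm _ _)
      (by rw [dist_comm, h₁₂]) fun z hz => not_lt.2 ?_)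
    rw [dist_comm z c]
    exact hmin z hz
  obtain ⟨c, hc, hc_lt⟩ := exists_mem_cellE_inter_norm_add_dist_lt_one hloc hncirc hz₁ hz₂ hne
    (hZD z₁ hz₁) htouch hdisk
  obtain ⟨h₁₂, hmin⟩ := (mem_cellE_inter_iff hz₁ hz₂).1 hc
  obtain ⟨p, r, hp, hpr⟩ := exists_distH_le_iff_dist_le dist_nonneg hc_lt
  have hr : ∀ z ∈ Z, r ≤ distH p z := fun z hz =>
    (hpr z (hZD z hz)).2.2 (by rw [dist_comm z c]; exact hmin z hz)
  have hr_eq : ∀ z ∈ Z, dist c z = dist c z₁ → distH p z = r := fun z hz h =>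
    le_antisymm ((hpr z (hZD z hz)).1.2 (by rw [dist_comm, h])) (hr z hz)
  exact ⟨p, (mem_cellH_iff hz₁).2 ⟨hp, fun z hz => (hr_eq z₁ hz₁ rfl).trans_le (hr z hz)⟩,
    (mem_cellH_iff hz₂).2 ⟨hp, fun z hz => (hr_eq z₂ hz₂ h₁₂.symm).trans_le (hr z hz)⟩⟩

theorem stmt6 (Z : Set (EuclideanSpace ℝ (Fin 2)))
    (hZD : ∀ z ∈ Z, ‖z‖ < 1)
    (hloc : ∀ s : Set (EuclideanSpace ℝ (Fin 2)), Bornology.IsBounded s → (Z ∩ s).Finite)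
    (hncol : ¬ ∃ (a d : EuclideanSpace ℝ (Fin 2)), ∀ z ∈ Z, ∃ t : ℝ, z = a + t • d)
    (hncirc : ∀ (c : EuclideanSpace ℝ (Fin 2)) (ρ : ℝ),
      {z ∈ Z | dist z c = ρ}.encard ≤ 3)
    (z₁ z₂ : EuclideanSpace ℝ (Fin 2)) (hz₁ : z₁ ∈ Z) (hz₂ : z₂ ∈ Z) (hne : z₁ ≠ z₂)
    -- the Euclidean cells touch
    (htouch : (cellE Z z₁ ∩ cellE Z z₂).Nonempty)
    -- every empty disk witnessing this touching is contained in the closed unit disk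
    (hwitness : ∀ (c : EuclideanSpace ℝ (Fin 2)) (ρ : ℝ), 0 < ρ →
      dist z₁ c = ρ → dist z₂ c = ρ → (∀ z ∈ Z, ¬ dist z c < ρ) →
      Metric.closedBall c ρ ⊆ Metric.closedBall (0 : EuclideanSpace ℝ (Fin 2)) 1) :
    (cellH Z z₁ ∩ cellH Z z₂).Nonempty :=
  stmt6_general Z hZD hloc hncirc z₁ z₂ hz₁ hz₂ hne htouch hwitness
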